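/- Assume parent-independent mutation: P_{ij} = Q_j for all i, j, where Q_1,…,Q_d > 0 and ∑_{j=1}^d Q_j = 1. Define q̃_k : ℤ^d → ℝ (k ∈ ℕ) by: q̃_k(n) = 0 whenever n has a negative component; for n ∈ ℕ^d, q̃_0(n) = ∏_{i=2}^d Γ(θQ_i + n_i)/Γ(θQ_i), and for k ≥ 1, q̃_k(n) = q̃_0(n) r_k(n) − ∑_{m=0}^{k−1} s_{k−m} q̃_m(n), where r_k(n) = (1/k!)(‖n‖ − n_1 + θ(1−Q_1))_k (1 − θQ_1 − n_1)_k and s_k = (1/k!)(θ(1−Q_1))_k (1 − θQ_1)_k. Then for every k ∈ ℕ this family satisfies: (I) q̃_k(e_1) = 1_{k=0} − 1_{k≥1} ∑_{i=2}^d q̃_{k−1}(e_i); (II) for i = 2,…,d, q̃_k(e_i) = 1_{k=0} θQ_i + 1_{k≥1} [ −θ q̃_{k−1}(e_i) + ∑_{j=2}^d q̃_{k−1}(e_i + e_j) ]; (III) for every integer n_1 > 1, q̃_k(n_1 e_1) = q̃_k((n_1−1)e_1) − 1_{k≥1}(n_1 − 2 + θ) q̃_{k−1}((n_1−1)e_1)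 + 1_{k≥1}(n_1 − 2 + θQ_1) q̃_{k−1}((n_1−2)e_1); (IV) for every n ∈ ℕ^d with ‖n‖ > 1, (‖n‖ − n_1) q̃_k(n) = ∑_{i=2}^d n_i(n_i − 1 + θQ_i) q̃_k(n − e_i) + 1_{k≥1} [ −‖n‖(‖n‖ − 1 + θ) q̃_{k−1}(n) + n_1(n_1 − 1 + θQ_1) q̃_{k−1}(n − e_1) + ‖n‖ ∑_{i=2}^d q̃_{k−1}(n + e_i) ]. -/

import Mathlib

open Finset

noncomputable section

/-- The `i`-th standard unit vector of `ℤ^d`. -/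
def stdE {d : ℕ} (i : Fin d) : Fin d → ℤ := fun j => if j = i then 1 else 0

/-- The total size `‖n‖ = n_1 + ⋯ + n_d` of a configuration. -/
def tot {d : ℕ} (n : Fin d → ℤ) : ℤ := ∑ i, n i

/-- `n ∈ ℕ^d`, i.e. all components of `n : ℤ^d` are nonnegative. -/
def IsNatVec {d : ℕ} (n : Fin d → ℤ) : Prop := ∀ i, 0 ≤ n i

/-!
Write `Fₙ = ∑ₖ q̃ₖ(n) xᵏ` and `₂F₀(u, v) = ∑ₖ (u)ₖ (v)ₖ xᵏ / k!`. The recursive definition of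
`q̃ₖ` says exactly that
`₂F₀(θ(1 - Q₁), 1 - θQ₁) · Fₙ = q̃₀(n) · ₂F₀(‖n‖ - n₁ + θ(1 - Q₁), 1 - θQ₁ - n₁)`.
Each of (I)–(IV) is a linear relation among the `Fₙ` with coefficients of degree at most one in
`x`; since `₂F₀(θ(1 - Q₁), 1 - θQ₁)` has constant term `1`, it suffices to check the relation
after multiplying by it. It then becomes a relation between `₂F₀`-series whose parameters differ
by integers, weighted by values of `q̃₀`. The weights are handled by `Γ(s + 1) = s Γ(s)`, and the
series by the contiguous relations
`₂F₀(u, v) = ₂F₀(u - 1, v) + x v ₂F₀(u, v + 1)` and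
`u ₂F₀(u + 1, v) - v ₂F₀(u, v + 1) = (u - v) ₂F₀(u, v)`.
Relation (II) is the case `n = eᵢ` of (IV).
-/

open PowerSeries

lemma ascPochhammer_succ_left_eval {S : Type*} [CommSemiring S] (k : ℕ) (u : S) :
    (ascPochhammer S (k + 1)).eval u = u * (ascPochhammer S k).eval (u + 1) := by
  simp [ascPochhammer_succ_left, Polynomial.eval_comp]

lemma coeff_X_mul_eq_ite {R : Type*} [Semiring R] (k : ℕ) (G : R⟦X⟧) :
    coeff k (X * G) = if 1 ≤ k then coeff (k - 1) G else 0 := by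
  simpa using coeff_X_pow_mul' G 1 k

lemma mul_mk_eq_C_mul_of_rec {R : Type*} [CommRing R] {S T : R⟦X⟧} (hS : constantCoeff S = 1)
    (hT : constantCoeff T = 1) (a : ℕ → R)
    (h : ∀ k, 1 ≤ k → a k = a 0 * coeff k T - ∑ m ∈ range k, coeff (k - m) S * a m) :
    S * mk a = C (a 0) * T := by
  ext k
  rw [mul_comm, coeff_mul,
    Nat.sum_antidiagonal_eq_sum_range_succ (fun i j => coeff i (mk a) * coeff j S),
    sum_range_succ, coeff_C_mul]
  simp only [coeff_mk, Nat.sub_self, coeff_zero_eq_constantCoeff_apply, hS, mul_one]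
  rcases Nat.eq_zero_or_pos k with rfl | hk
  · simp [hT]
  · rw [h k hk]; simp only [mul_comm (a _)]; ring

/-- The formal hypergeometric series `₂F₀(u, v; ; x)`. -/
def twoFZero (u v : ℝ) : ℝ⟦X⟧ :=
  mk fun k => 1 / (k.factorial : ℝ) * (ascPochhammer ℝ k).eval u * (ascPochhammer ℝ k).eval v

lemma coeff_twoFZero (k : ℕ) (u v : ℝ) :
    coeff k (twoFZero u v) =
      1 / (k.factorial : ℝ) * (ascPochhammer ℝ k).eval u * (ascPochhammer ℝ k).eval v :=
  coeff_mk _ _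

lemma constantCoeff_twoFZero (u v : ℝ) : constantCoeff (twoFZero u v) = 1 := by
  simp [← coeff_zero_eq_constantCoeff_apply, coeff_twoFZero]

lemma twoFZero_ne_zero (u v : ℝ) : twoFZero u v ≠ 0 := fun h => by
  simpa [h] using constantCoeff_twoFZero u v

lemma twoFZero_comm (u v : ℝ) : twoFZero u v = twoFZero v u := by
  ext k; simp only [coeff_twoFZero]; ring

lemma twoFZero_contiguous_left (u v : ℝ) :
    twoFZero u v = twoFZero (u - 1) v + X * C v * twoFZero u (v + 1) := by
  ext k
  rw [map_add, mul_assoc, coeff_X_mul_eq_ite, coeff_C_mul]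
  rcases k with _ | k
  · simp [coeff_twoFZero]
  · simp only [coeff_twoFZero, le_add_iff_nonneg_left, zero_le, if_true, add_tsub_cancel_right]
    rw [ascPochhammer_succ_eval k u, ascPochhammer_succ_left_eval k (u - 1), sub_add_cancel,
      ascPochhammer_succ_left_eval k v, Nat.factorial_succ]
    have : (k.factorial : ℝ) ≠ 0 := by positivity
    push_cast
    field_simp
    ring

lemma twoFZero_contiguous_right (u v : ℝ) :
    twoFZero u v = twoFZero u (v - 1) + X * C u * twoFZero (u + 1) v := by
  rw [twoFZero_comm u, twoFZero_comm u, twoFZero_comm (u + 1), twoFZero_contiguous_left]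

lemma C_mul_twoFZero_add_one_sub (u v : ℝ) :
    C u * twoFZero (u + 1) v - C v * twoFZero u (v + 1) = C (u - v) * twoFZero u v := by
  ext k
  simp only [map_sub (coeff k), coeff_C_mul, coeff_twoFZero]
  have hu := ascPochhammer_succ_left_eval k u
  have hv := ascPochhammer_succ_left_eval k v
  rw [ascPochhammer_succ_eval] at hu hv
  linear_combination (1 / (k.factorial : ℝ)) *
    ((ascPochhammer ℝ k).eval u * hv - (ascPochhammer ℝ k).eval v * hu)

section Configurations

variable {N : ℕ}

@[simp] lemma stdE_apply_self (i : Fin N) : stdE i i = 1 := by simp [stdE]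

@[simp] lemma stdE_apply_of_ne {i j : Fin N} (h : j ≠ i) : stdE i j = 0 := by simp [stdE, h]

@[simp] lemma tot_add (n m : Fin N → ℤ) : tot (n + m) = tot n + tot m := by
  simp [tot, sum_add_distrib]

@[simp] lemma tot_sub (n m : Fin N → ℤ) : tot (n - m) = tot n - tot m := by
  simp [tot, sum_sub_distrib]

@[simp] lemma tot_smul (c : ℤ) (n : Fin N → ℤ) : tot (c • n) = c * tot n := by
  simp [tot, mul_sum]

@[simp] lemma tot_stdE (i : Fin N) : tot (stdE i) = 1 := by simp [tot, stdE]

lemma tot_sub_apply_zero [NeZero N] (n : Fin N → ℤ) :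
    (tot n : ℝ) - n 0 = ∑ i ∈ univ.erase 0, (n i : ℝ) := by
  rw [sum_erase_eq_sub (mem_univ 0), tot]; push_cast; rfl

lemma IsNatVec.add_stdE {n : Fin N → ℤ} (hn : IsNatVec n) (i : Fin N) : IsNatVec (n + stdE i) :=
  fun j => add_nonneg (hn j) (by unfold stdE; split_ifs <;> norm_num)

lemma IsNatVec.sub_stdE {n : Fin N → ℤ} (hn : IsNatVec n) {i : Fin N} (hi : 1 ≤ n i) :
    IsNatVec (n - stdE i) := fun j => by
  by_cases h : j = i
  · subst h; simpa using hi
  · simpa [h] using hn j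

lemma isNatVec_smul_stdE {c : ℤ} (hc : 0 ≤ c) (i : Fin N) : IsNatVec (c • stdE i) := fun j => by
  unfold stdE; simp only [Pi.smul_apply, smul_eq_mul]; split_ifs <;> simp [hc]

lemma isNatVec_stdE (i : Fin N) : IsNatVec (stdE i) := by
  simpa using isNatVec_smul_stdE zero_le_one i

end Configurations

section GammaWeight

variable {N : ℕ} [NeZero N] (α : Fin N → ℝ)

open Classical in
/-- `q̃₀` of the paper, with `α i = θ Q i`. -/
def gammaWeight (n : Fin N → ℤ) : ℝ :=
  if IsNatVec n then ∏ i ∈ univ.erase 0, Real.Gamma (α i + n i) / Real.Gamma (α i) else 0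

lemma gammaWeight_of_isNatVec {n : Fin N → ℤ} (hn : IsNatVec n) :
    gammaWeight α n = ∏ i ∈ univ.erase 0, Real.Gamma (α i + n i) / Real.Gamma (α i) :=
  if_pos hn

lemma gammaWeight_of_not_isNatVec {n : Fin N → ℤ} (hn : ¬ IsNatVec n) : gammaWeight α n = 0 :=
  if_neg hn

lemma gammaWeight_congr {n m : Fin N → ℤ} (hn : IsNatVec n) (hm : IsNatVec m)
    (h : ∀ i ≠ 0, n i = m i) : gammaWeight α n = gammaWeight α m := by
  rw [gammaWeight_of_isNatVec α hn, gammaWeight_of_isNatVec α hm]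
  exact prod_congr rfl fun i hi => by rw [h i (ne_of_mem_erase hi)]

lemma mul_gammaWeight_sub_stdE_zero {n : Fin N → ℤ} (hn : IsNatVec n) :
    (n 0 : ℝ) * gammaWeight α (n - stdE 0) = n 0 * gammaWeight α n := by
  rcases (hn 0).eq_or_lt with h | h
  · simp [← h]
  · rw [gammaWeight_congr α (hn.sub_stdE h) hn fun i hi => by simp [hi]]

variable {α}

lemma gammaWeight_zero (hα : ∀ i ≠ 0, 0 < α i) : gammaWeight α 0 = 1 :=
  (gammaWeight_of_isNatVec α fun _ => le_rfl).trans <| prod_eq_one fun i hi => by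
    simpa using div_self (Real.Gamma_pos_of_pos (hα i (ne_of_mem_erase hi))).ne'

lemma gammaWeight_smul_stdE_zero (hα : ∀ i ≠ 0, 0 < α i) {c : ℤ} (hc : 0 ≤ c) :
    gammaWeight α (c • stdE 0) = 1 := by
  rw [← gammaWeight_zero hα]
  exact gammaWeight_congr α (isNatVec_smul_stdE hc 0) (fun _ => le_rfl) fun i hi => by simp [hi]

lemma gammaWeight_add_stdE {n : Fin N → ℤ} (hn : IsNatVec n) {i : Fin N} (hi : i ≠ 0)
    (hpole : α i + n i ≠ 0) : gammaWeight α (n + stdE i) = (α i + n i) * gammaWeight α n := by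
  have hmem : i ∈ univ.erase (0 : Fin N) := mem_erase.mpr ⟨hi, mem_univ i⟩
  rw [gammaWeight_of_isNatVec α (hn.add_stdE i), gammaWeight_of_isNatVec α hn,
    ← mul_prod_erase _ _ hmem, ← mul_prod_erase _ _ hmem,
    prod_congr rfl fun j hj => by rw [Pi.add_apply, stdE_apply_of_ne (ne_of_mem_erase hj)]]
  simp only [Pi.add_apply, stdE_apply_self, Int.cast_add, Int.cast_one, add_zero, ← add_assoc,
    Real.Gamma_add_one hpole]
  ring

lemma gammaWeight_stdE (hα : ∀ i ≠ 0, 0 < α i) {i : Fin N} (hi : i ≠ 0) :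
    gammaWeight α (stdE i) = α i := by
  have h := gammaWeight_add_stdE (n := 0) (fun _ => le_rfl) hi (by simpa using (hα i hi).ne')
  rwa [zero_add, gammaWeight_zero hα, Pi.zero_apply, Int.cast_zero, add_zero, mul_one] at h

lemma mul_gammaWeight_sub_stdE {n : Fin N → ℤ} (hn : IsNatVec n) {i : Fin N} (hi : i ≠ 0)
    (hαi : 0 < α i) :
    n i * (n i - 1 + α i) * gammaWeight α (n - stdE i) = n i * gammaWeight α n := by
  rcases (hn i).eq_or_lt with h | h
  · simp [← h]
  · have hpole : α i + ((n - stdE i) i : ℤ) ≠ 0 := by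
      have : (1 : ℝ) ≤ n i := by exact_mod_cast h
      simp only [Pi.sub_apply, stdE_apply_self, Int.cast_sub, Int.cast_one]
      linarith
    have h' := gammaWeight_add_stdE (hn.sub_stdE h) hi hpole
    rw [sub_add_cancel] at h'
    rw [h']; simp; ring

end GammaWeight

/-- `F n` stands for `∑ₖ q̃ₖ(n) xᵏ`, with `α i = θ Q i`. -/
def IsPIMExpansion {N : ℕ} [NeZero N] (θ : ℝ) (α : Fin N → ℝ) (F : (Fin N → ℤ) → ℝ⟦X⟧) :
    Prop :=
  ∀ n, twoFZero (θ - α 0) (1 - α 0) * F n =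
    C (gammaWeight α n) * twoFZero ((tot n : ℝ) - n 0 + (θ - α 0)) (1 - α 0 - n 0)

namespace IsPIMExpansion

variable {N : ℕ} [NeZero N] {θ : ℝ} {α : Fin N → ℝ} {F : (Fin N → ℤ) → ℝ⟦X⟧}

lemma mul_sub_stdE (hF : IsPIMExpansion θ α F) (n : Fin N → ℤ) {i : Fin N} (hi : i ≠ 0) :
    twoFZero (θ - α 0) (1 - α 0) * F (n - stdE i) = C (gammaWeight α (n - stdE i)) *
      twoFZero ((tot n : ℝ) - n 0 + (θ - α 0) - 1) (1 - α 0 - n 0) := by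
  rw [hF]; congr 2 <;> simp [hi.symm]; ring

lemma mul_add_stdE (hF : IsPIMExpansion θ α F) (n : Fin N → ℤ) {i : Fin N} (hi : i ≠ 0) :
    twoFZero (θ - α 0) (1 - α 0) * F (n + stdE i) = C (gammaWeight α (n + stdE i)) *
      twoFZero ((tot n : ℝ) - n 0 + (θ - α 0) + 1) (1 - α 0 - n 0) := by
  rw [hF]; congr 2 <;> simp [hi.symm]; ring

lemma mul_sub_stdE_zero (hF : IsPIMExpansion θ α F) (n : Fin N → ℤ) :
    twoFZero (θ - α 0) (1 - α 0) * F (n - stdE 0) = C (gammaWeight α (n - stdE 0)) *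
      twoFZero ((tot n : ℝ) - n 0 + (θ - α 0)) (1 - α 0 - n 0 + 1) := by
  rw [hF]; congr 2 <;> simp; ring

lemma mul_smul_stdE_zero (hF : IsPIMExpansion θ α F) (hα : ∀ i ≠ 0, 0 < α i) {c : ℤ}
    (hc : 0 ≤ c) :
    twoFZero (θ - α 0) (1 - α 0) * F (c • stdE 0) = twoFZero (θ - α 0) (1 - α 0 - c) := by
  rw [hF, gammaWeight_smul_stdE_zero hα hc, tot_smul, tot_stdE]; simp

lemma apply_zero (hF : IsPIMExpansion θ α F) (hα : ∀ i ≠ 0, 0 < α i) : F 0 = 1 := by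
  apply mul_left_cancel₀ (twoFZero_ne_zero (θ - α 0) (1 - α 0))
  rw [hF, gammaWeight_zero hα]
  simp [tot]

lemma recursion (hF : IsPIMExpansion θ α F) (hα : ∀ i ≠ 0, 0 < α i) (hsum : ∑ i, α i = θ)
    {n : Fin N → ℤ} (hn : IsNatVec n) :
    C ((tot n : ℝ) - n 0) * F n =
      ∑ i ∈ univ.erase 0, C ((n i : ℝ) * (n i - 1 + α i)) * F (n - stdE i) +
        X * (C (-(tot n : ℝ) * (tot n - 1 + θ)) * F n +
          C ((n 0 : ℝ) * (n 0 - 1 + α 0)) * F (n - stdE 0) +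
          C (tot n : ℝ) * ∑ i ∈ univ.erase 0, F (n + stdE i)) := by
  have hdown : twoFZero (θ - α 0) (1 - α 0) *
      ∑ i ∈ univ.erase 0, C ((n i : ℝ) * (n i - 1 + α i)) * F (n - stdE i) =
      C (((tot n : ℝ) - n 0) * gammaWeight α n) *
        twoFZero ((tot n : ℝ) - n 0 + (θ - α 0) - 1) (1 - α 0 - n 0) := by
    calc _ = ∑ i ∈ univ.erase 0, C ((n i : ℝ) * gammaWeight α n) *
          twoFZero ((tot n : ℝ) - n 0 + (θ - α 0) - 1) (1 - α 0 - n 0) := by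
          rw [mul_sum]
          refine sum_congr rfl fun i hi => ?_
          have hi0 := ne_of_mem_erase hi
          rw [mul_left_comm, hF.mul_sub_stdE n hi0, ← mul_assoc, ← map_mul,
            mul_gammaWeight_sub_stdE hn hi0 (hα i hi0)]
      _ = _ := by rw [← sum_mul, ← map_sum, ← sum_mul, ← tot_sub_apply_zero]
  have hup : twoFZero (θ - α 0) (1 - α 0) * ∑ i ∈ univ.erase 0, F (n + stdE i) =
      C (((tot n : ℝ) - n 0 + (θ - α 0)) * gammaWeight α n) *
        twoFZero ((tot n : ℝ) - n 0 + (θ - α 0) + 1) (1 - α 0 - n 0) := by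
    calc _ = ∑ i ∈ univ.erase 0, C ((α i + n i) * gammaWeight α n) *
          twoFZero ((tot n : ℝ) - n 0 + (θ - α 0) + 1) (1 - α 0 - n 0) := by
          rw [mul_sum]
          refine sum_congr rfl fun i hi => ?_
          have hi0 := ne_of_mem_erase hi
          have hpole : α i + n i ≠ 0 :=
            (add_pos_of_pos_of_nonneg (hα i hi0) (by exact_mod_cast hn i)).ne'
          rw [hF.mul_add_stdE n hi0, gammaWeight_add_stdE hn hi0 hpole]
      _ = _ := by
          rw [← sum_mul, ← map_sum, ← sum_mul, sum_add_distrib, sum_erase_eq_sub (mem_univ 0),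
            hsum, ← tot_sub_apply_zero, add_comm (θ - α 0)]
  have hfit : twoFZero (θ - α 0) (1 - α 0) * (C ((n 0 : ℝ) * (n 0 - 1 + α 0)) * F (n - stdE 0)) =
      C ((n 0 : ℝ) * (n 0 - 1 + α 0) * gammaWeight α n) *
        twoFZero ((tot n : ℝ) - n 0 + (θ - α 0)) (1 - α 0 - n 0 + 1) := by
    rw [mul_left_comm, hF.mul_sub_stdE_zero, ← mul_assoc, ← map_mul, mul_right_comm,
      mul_gammaWeight_sub_stdE_zero α hn, mul_right_comm]
  apply mul_left_cancel₀ (twoFZero_ne_zero (θ - α 0) (1 - α 0))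
  linear_combination (norm := skip)
    (C ((tot n : ℝ) - n 0) - X * C (-(tot n : ℝ) * (tot n - 1 + θ))) * hF n - hdown - X * hfit
      - X * C (tot n : ℝ) * hup
      + C (((tot n : ℝ) - n 0) * gammaWeight α n) *
        twoFZero_contiguous_left ((tot n : ℝ) - n 0 + (θ - α 0)) (1 - α 0 - n 0)
      - X * C ((tot n : ℝ) * gammaWeight α n) *
        C_mul_twoFZero_add_one_sub ((tot n : ℝ) - n 0 + (θ - α 0)) (1 - α 0 - n 0)
  simp only [map_mul, map_sub, map_add, map_neg, map_one]
  ring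

lemma boundary_fit (hF : IsPIMExpansion θ α F) (hα : ∀ i ≠ 0, 0 < α i) (hsum : ∑ i, α i = θ) :
    F (stdE 0) = 1 - X * ∑ i ∈ univ.erase 0, F (stdE i) := by
  have hunfit : twoFZero (θ - α 0) (1 - α 0) * ∑ i ∈ univ.erase 0, F (stdE i) =
      C (θ - α 0) * twoFZero (θ - α 0 + 1) (1 - α 0) := by
    calc _ = ∑ i ∈ univ.erase 0, C (α i) * twoFZero (θ - α 0 + 1) (1 - α 0) := by
          rw [mul_sum]
          refine sum_congr rfl fun i hi => ?_
          have hi0 := ne_of_mem_erase hi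
          rw [hF, gammaWeight_stdE hα hi0]
          congr 2 <;> simp [Ne.symm hi0]; ring
      _ = _ := by rw [← sum_mul, ← map_sum, sum_erase_eq_sub (mem_univ 0), hsum]
  have hfit := hF.mul_smul_stdE_zero hα zero_le_one
  rw [one_smul] at hfit
  apply mul_left_cancel₀ (twoFZero_ne_zero (θ - α 0) (1 - α 0))
  linear_combination (norm := ring_nf) hfit + X * hunfit
    - twoFZero_contiguous_right (θ - α 0) (1 - α 0)

lemma boundary_unfit (hF : IsPIMExpansion θ α F) (hα : ∀ i ≠ 0, 0 < α i) (hsum : ∑ i, α i = θ)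
    {i : Fin N} (hi : i ≠ 0) :
    F (stdE i) =
      C (α i) + X * (C (-θ) * F (stdE i) + ∑ j ∈ univ.erase 0, F (stdE i + stdE j)) := by
  have hsingle : ∑ j ∈ univ.erase 0,
      C ((stdE i j : ℝ) * (stdE i j - 1 + α j)) * F (stdE i - stdE j) = C (α i) := by
    rw [sum_eq_single_of_mem i (mem_erase.mpr ⟨hi, mem_univ i⟩) fun j _ hj => by simp [hj]]
    simp [hF.apply_zero hα]
  have h := hF.recursion hα hsum (isNatVec_stdE i)
  rw [hsingle] at h
  simpa [hi.symm] using h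

lemma recursion_fit (hF : IsPIMExpansion θ α F) (hα : ∀ i ≠ 0, 0 < α i) {m : ℤ} (hm : 1 < m) :
    F (m • stdE 0) = F ((m - 1) • stdE 0) - X * (C ((m : ℝ) - 2 + θ) * F ((m - 1) • stdE 0)) +
      X * (C ((m : ℝ) - 2 + α 0) * F ((m - 2) • stdE 0)) := by
  have h0 := hF.mul_smul_stdE_zero hα (c := m) (by omega)
  have h1 := hF.mul_smul_stdE_zero hα (c := m - 1) (by omega)
  have h2 := hF.mul_smul_stdE_zero hα (c := m - 2) (by omega)
  push_cast at h1 h2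
  apply mul_left_cancel₀ (twoFZero_ne_zero (θ - α 0) (1 - α 0))
  linear_combination (norm := skip)
    h0 - (1 - X * C ((m : ℝ) - 2 + θ)) * h1 - X * C ((m : ℝ) - 2 + α 0) * h2
      - twoFZero_contiguous_right (θ - α 0) (2 - α 0 - m)
      - X * C_mul_twoFZero_add_one_sub (θ - α 0) (2 - α 0 - m)
  simp only [map_sub, map_add]
  ring_nf

end IsPIMExpansion

/-- Allele `1` of the paper is the index `0 : Fin (d + 2)`. -/
theorem PIM_explicit_coefficients_satisfy_characterisation {d : ℕ} (θ : ℝ) (hθ : 0 < θ)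
    (Q : Fin (d + 2) → ℝ) (hQpos : ∀ j, 0 < Q j) (hQsum : ∑ j, Q j = 1)
    (r : ℕ → (Fin (d + 2) → ℤ) → ℝ)
    (hr : ∀ k n, r k n =
      (1 / (Nat.factorial k : ℝ))
        * (ascPochhammer ℝ k).eval (((tot n : ℝ) - (n 0 : ℝ)) + θ * (1 - Q 0))
        * (ascPochhammer ℝ k).eval (1 - θ * Q 0 - (n 0 : ℝ)))
    (s : ℕ → ℝ)
    (hs : ∀ k, s k =
      (1 / (Nat.factorial k : ℝ))
        * (ascPochhammer ℝ k).eval (θ * (1 - Q 0))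
        * (ascPochhammer ℝ k).eval (1 - θ * Q 0))
    (qt : ℕ → (Fin (d + 2) → ℤ) → ℝ)
    (hqtneg : ∀ k : ℕ, ∀ n : Fin (d + 2) → ℤ, (∃ i, n i < 0) → qt k n = 0)
    (hqt0 : ∀ n : Fin (d + 2) → ℤ, IsNatVec n →
      qt 0 n = ∏ i ∈ univ.erase 0,
        Real.Gamma (θ * Q i + (n i : ℝ)) / Real.Gamma (θ * Q i))
    (hqtk : ∀ k : ℕ, 1 ≤ k → ∀ n : Fin (d + 2) → ℤ, IsNatVec n →
      qt k n = qt 0 n * r k n - ∑ m ∈ range k, s (k - m) * qt m n)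
    (k : ℕ) :
    -- (I) boundary, fit allele
    (qt k (stdE 0)
      = (if k = 0 then 1 else 0)
        - (if 1 ≤ k then ∑ i ∈ univ.erase 0, qt (k - 1) (stdE i) else 0)) ∧
    -- (II) boundary, unfit alleles
    (∀ i : Fin (d + 2), i ≠ 0 →
      qt k (stdE i)
        = (if k = 0 then θ * Q i else 0)
          + (if 1 ≤ k then
              - θ * qt (k - 1) (stdE i)
              + ∑ j ∈ univ.erase 0, qt (k - 1) (stdE i + stdE j)
            else 0)) ∧
    -- (III) recursion, fit allele only
    (∀ n₁ : ℤ, 1 < n₁ →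
      qt k (n₁ • stdE 0)
        = qt k ((n₁ - 1) • stdE 0)
          - (if 1 ≤ k then ((n₁ : ℝ) - 2 + θ) * qt (k - 1) ((n₁ - 1) • stdE 0) else 0)
          + (if 1 ≤ k then ((n₁ : ℝ) - 2 + θ * Q 0) * qt (k - 1) ((n₁ - 2) • stdE 0)
             else 0)) ∧
    -- (IV) recursion, general
    (∀ n : Fin (d + 2) → ℤ, IsNatVec n → 1 < tot n →
      ((tot n : ℝ) - (n 0 : ℝ)) * qt k n
        = (∑ i ∈ univ.erase 0,
            (n i : ℝ) * ((n i : ℝ) - 1 + θ * Q i) * qt k (n - stdE i))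
          + (if 1 ≤ k then
              - (tot n : ℝ) * ((tot n : ℝ) - 1 + θ) * qt (k - 1) n
              + (n 0 : ℝ) * ((n 0 : ℝ) - 1 + θ * Q 0) * qt (k - 1) (n - stdE 0)
              + (tot n : ℝ) * ∑ i ∈ univ.erase 0, qt (k - 1) (n + stdE i)
            else 0)) := by
  have hα : ∀ i ≠ 0, 0 < θ * Q i := fun i _ => mul_pos hθ (hQpos i)
  have hsum : ∑ i, θ * Q i = θ := by rw [← mul_sum, hQsum, mul_one]
  have hqt0' : ∀ n, qt 0 n = gammaWeight (fun i => θ * Q i) n := fun n => by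
    by_cases hn : IsNatVec n
    · rw [hqt0 n hn, gammaWeight_of_isNatVec _ hn]
    · rw [gammaWeight_of_not_isNatVec _ hn, hqtneg 0 n (by simpa [IsNatVec] using hn)]
  have hF : IsPIMExpansion θ (fun i => θ * Q i) (fun n => mk fun k => qt k n) := fun n => by
    rw [← hqt0' n]
    refine mul_mk_eq_C_mul_of_rec (constantCoeff_twoFZero _ _) (constantCoeff_twoFZero _ _) _
      fun k hk => ?_
    by_cases hn : IsNatVec n
    · simp only [hqtk k hk n hn, hr, hs, coeff_twoFZero, mul_one_sub]
    · simp [hqtneg _ n (by simpa [IsNatVec] using hn)]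
  refine ⟨?_, fun i hi => ?_, fun n₁ hn₁ => ?_, fun n hn _ => ?_⟩
  · simpa [coeff_X_mul_eq_ite] using congrArg (coeff k) (hF.boundary_fit hα hsum)
  · simpa only [coeff_X_mul_eq_ite, map_add, map_sum, coeff_C_mul, coeff_C, coeff_mk]
      using congrArg (coeff k) (hF.boundary_unfit hα hsum hi)
  · simpa only [coeff_X_mul_eq_ite, map_add (coeff k), map_sub (coeff k), coeff_C_mul, coeff_mk]
      using congrArg (coeff k) (hF.recursion_fit hα hn₁)
  · simpa only [coeff_X_mul_eq_ite, map_add, map_sum, coeff_C_mul, coeff_mk]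
      using congrArg (coeff k) (hF.recursion hα hsum hn)
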